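/- Let S be a finite collection of non-increasing bar charts. Then there exists an ordering (permutation) σ of S such that the greedy packing q with respect to the order σ—defined by q(σ(1)) = 1 and q(σ(k+1)) = the least integer m ≥ q(σ(k)) such that placing BC σ(k+1) at cell m keeps the packing feasible—is a feasible packing with L(q) = OPT(S), the minimum length over all feasible packings of S. -/

import Mathlib

/-!
A bar chart (BC) `i` has `l i` bars with heights `h i 0, …, h i (l i - 1)` in `(0,1]`.
A packing `p` places bar `j` of BC `i` in cell `p i + j` (cells are `1, 2, …`).
-/

/-- Validity of the data: each BC is nonempty and all bar heights lie in `(0,1]`. -/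
def ValidBC {n : ℕ} (l : Fin n → ℕ) (h : Fin n → ℕ → ℝ) : Prop :=
  (∀ i, 0 < l i) ∧ ∀ i j, j < l i → h i j ∈ Set.Ioc (0 : ℝ) 1

/-- Total height of the bars lying in cell `c` under packing `p`. -/
def cellLoad {n : ℕ} (l : Fin n → ℕ) (h : Fin n → ℕ → ℝ) (p : Fin n → ℕ) (c : ℕ) : ℝ :=
  ∑ i, ∑ j ∈ Finset.range (l i), if p i + j = c then h i j else 0

/-- A packing is feasible if cells start at 1 and every cell carries total height at most 1. -/
def Feasible {n : ℕ} (l : Fin n → ℕ) (h : Fin n → ℕ → ℝ) (p : Fin n → ℕ) : Prop :=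
  (∀ i, 1 ≤ p i) ∧ ∀ c, cellLoad l h p c ≤ 1

/-- The (finite) set of cells containing at least one bar. -/
def occupied {n : ℕ} (l : Fin n → ℕ) (p : Fin n → ℕ) : Finset ℕ :=
  (Finset.univ.sigma fun i => Finset.range (l i)).image fun x => p x.1 + x.2

/-- The length of a packing: the number of cells containing at least one bar. -/
def packLen {n : ℕ} (l : Fin n → ℕ) (p : Fin n → ℕ) : ℕ :=
  (occupied l p).card

/-- The minimum length of a feasible packing. -/
noncomputable def OPT {n : ℕ} (l : Fin n → ℕ) (h : Fin n → ℕ → ℝ) : ℕ :=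
  sInf {m | ∃ p, Feasible l h p ∧ packLen l p = m}

/-- Contribution to cell `c` of BC `i` when placed at cell `m`. -/
def bcLoad {n : ℕ} (l : Fin n → ℕ) (h : Fin n → ℕ → ℝ) (i : Fin n) (m c : ℕ) : ℝ :=
  ∑ j ∈ Finset.range (l i), if m + j = c then h i j else 0

/-- Total height in cell `c` contributed by the BCs of index less than `K`. -/
def partialLoad {n : ℕ} (l : Fin n → ℕ) (h : Fin n → ℕ → ℝ) (q : Fin n → ℕ)
    (K c : ℕ) : ℝ :=
  ∑ i : Fin n, if (i : ℕ) < K then bcLoad l h i (q i) c else 0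

/-- `q` is the greedy packing: BC 1 is placed at cell 1 and, inductively, BC `k+1`
is placed at the least cell `m ≥ q k` such that placing it there keeps the packing
of the first `k+1` BCs feasible. -/
def IsGreedy {n : ℕ} (l : Fin n → ℕ) (h : Fin n → ℕ → ℝ) (q : Fin n → ℕ) : Prop :=
  (∀ h0 : 0 < n, q ⟨0, h0⟩ = 1) ∧
  ∀ (k : ℕ) (hk : k + 1 < n),
    q ⟨k + 1, hk⟩ = sInf {m | q ⟨k, Nat.lt_of_succ_lt hk⟩ ≤ m ∧
      ∀ c, partialLoad l h q (k + 1) c + bcLoad l h ⟨k + 1, hk⟩ m c ≤ 1}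

/-- Total height in cell `c` contributed by the first `K` BCs in the order `σ`. -/
def partialLoadWrt {n : ℕ} (l : Fin n → ℕ) (h : Fin n → ℕ → ℝ)
    (σ : Equiv.Perm (Fin n)) (q : Fin n → ℕ) (K c : ℕ) : ℝ :=
  ∑ t : Fin n, if (t : ℕ) < K then bcLoad l h (σ t) (q (σ t)) c else 0

/-- `q` is the greedy packing with respect to the order `σ`: BC `σ 1` is placed at
cell 1 and, inductively, BC `σ (k+1)` is placed at the least cell
`m ≥ q (σ k)` such that placing it there keeps the packing of `σ 1, …, σ (k+1)`
feasible. -/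
def IsGreedyWrt {n : ℕ} (l : Fin n → ℕ) (h : Fin n → ℕ → ℝ)
    (σ : Equiv.Perm (Fin n)) (q : Fin n → ℕ) : Prop :=
  (∀ h0 : 0 < n, q (σ ⟨0, h0⟩) = 1) ∧
  ∀ (k : ℕ) (hk : k + 1 < n),
    q (σ ⟨k + 1, hk⟩) = sInf {m | q (σ ⟨k, Nat.lt_of_succ_lt hk⟩) ≤ m ∧
      ∀ c, partialLoadWrt l h σ q (k + 1) c + bcLoad l h (σ ⟨k + 1, hk⟩) m c ≤ 1}

/-!
Compress an optimal packing `p` by closing empty cells one at a time, so that it occupies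
exactly the cells `1, …, OPT`, and order the BCs by their starting cell in `p`. Along this
order the greedy packing `q` never places a BC later than `p` does: since bars are
non-increasing, moving earlier BCs to the left only lowers the load of the cells at and after
the next BC's cell in `p`, so that cell stays admissible. Moreover `q` leaves no empty cell
below an occupied one: the first BC placed right after an empty cell would have fitted one cell
further left, again because its bars are non-increasing. Hence `q` occupies `1, …, L(q)` and
its last occupied cell is at most the last one of `p`.
-/

open Finset

theorem Finset.eq_Icc_one_card_of_pred_mem {s : Finset ℕ} (hpos : ∀ c ∈ s, 1 ≤ c)
    (hpred : ∀ c, 1 ≤ c → c + 1 ∈ s → c ∈ s) : s = Icc 1 #s := by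
  have hdown : ∀ d k, d + k ∈ s → 1 ≤ d → d ∈ s := by
    intro d k
    induction k with
    | zero => exact fun hd _ => hd
    | succ k ih => exact fun hk hd => ih (hpred _ (by omega) (by rwa [← add_assoc] at hk)) hd
  obtain ⟨M, rfl⟩ : ∃ M, s = Icc 1 M := by
    refine ⟨s.sup id, ext fun c => ⟨fun hc => mem_Icc.2 ⟨hpos c hc, le_sup (f := id) hc⟩,
      fun hc => ?_⟩⟩
    obtain ⟨hc1, hcM⟩ := mem_Icc.1 hc
    have hs : s.Nonempty := nonempty_iff_ne_empty.2 fun hs => by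
      rw [hs, sup_empty, Nat.bot_eq_zero] at hcM
      omega
    obtain ⟨M, hM, hMeq⟩ := exists_mem_eq_sup s hs id
    rw [hMeq, id] at hcM
    exact hdown c (M - c) (by rwa [Nat.add_sub_cancel' hcM]) hc1
  rw [Nat.card_Icc, Nat.add_sub_cancel]

variable {n : ℕ} {l : Fin n → ℕ} {h : Fin n → ℕ → ℝ}

def NonIncreasing (l : Fin n → ℕ) (h : Fin n → ℕ → ℝ) : Prop :=
  ∀ (i : Fin n) (j : ℕ), j + 1 < l i → h i (j + 1) ≤ h i j

theorem NonIncreasing.antitoneOn (hni : NonIncreasing l h) (i : Fin n) :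
    AntitoneOn (h i) (Set.Iio (l i)) :=
  antitoneOn_of_succ_le Set.ordConnected_Iio fun j _ _ hj => hni i j hj

theorem bcLoad_eq (i : Fin n) (m c : ℕ) :
    bcLoad l h i m c = if m ≤ c ∧ c - m < l i then h i (c - m) else 0 := by
  rw [bcLoad]
  split_ifs with hc
  · rw [sum_eq_single_of_mem (c - m) (mem_range.2 hc.2) fun j _ hj => if_neg (by omega),
      if_pos (by omega)]
  · exact sum_eq_zero fun j hj => if_neg (by rw [mem_range] at hj; omega)

theorem bcLoad_of_lt {i : Fin n} {m c : ℕ} (hc : c < m) : bcLoad l h i m c = 0 := by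
  rw [bcLoad_eq, if_neg (by omega)]

theorem bcLoad_nonneg (hval : ValidBC l h) (i : Fin n) (m c : ℕ) : 0 ≤ bcLoad l h i m c := by
  rw [bcLoad_eq]
  split_ifs with hc
  exacts [(hval.2 i _ hc.2).1.le, le_rfl]

theorem bcLoad_le_one (hval : ValidBC l h) (i : Fin n) (m c : ℕ) : bcLoad l h i m c ≤ 1 := by
  rw [bcLoad_eq]
  split_ifs with hc
  exacts [(hval.2 i _ hc.2).2, zero_le_one]

theorem bcLoad_le_bcLoad (hval : ValidBC l h) (hni : NonIncreasing l h) {i : Fin n}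
    {m m' c : ℕ} (hm : m ≤ m') (hm' : m' ≤ c) : bcLoad l h i m c ≤ bcLoad l h i m' c := by
  by_cases hc : c - m < l i
  · rw [bcLoad_eq, bcLoad_eq, if_pos ⟨by omega, hc⟩, if_pos ⟨hm', by omega⟩]
    exact hni.antitoneOn i (Set.mem_Iio.2 (by omega)) hc (by omega)
  · rw [bcLoad_eq, if_neg (by omega)]
    exact bcLoad_nonneg hval i m' c

theorem bcLoad_le_bcLoad_succ (hval : ValidBC l h) (hni : NonIncreasing l h) {i : Fin n}
    {m c : ℕ} (hc : c ≠ m) : bcLoad l h i m c ≤ bcLoad l h i (m + 1) c := by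
  rcases Nat.lt_or_gt_of_ne hc with hc | hc
  · rw [bcLoad_of_lt hc, bcLoad_of_lt (by omega)]
  · exact bcLoad_le_bcLoad hval hni (Nat.le_succ m) hc

theorem mem_occupied {p : Fin n → ℕ} {c : ℕ} :
    c ∈ occupied l p ↔ ∃ i, ∃ j < l i, p i + j = c := by
  simp [occupied]

theorem cellLoad_eq_sum (p : Fin n → ℕ) (c : ℕ) :
    cellLoad l h p c = ∑ i, bcLoad l h i (p i) c := rfl

theorem cellLoad_eq_zero {p : Fin n → ℕ} {c : ℕ} (hc : c ∉ occupied l p) :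
    cellLoad l h p c = 0 :=
  sum_eq_zero fun i _ => by
    rw [← bcLoad, bcLoad_eq, if_neg]
    exact fun hic => hc (mem_occupied.2 ⟨i, c - p i, hic.2, by omega⟩)

theorem partialLoadWrt_zero (σ : Equiv.Perm (Fin n)) (q : Fin n → ℕ) (c : ℕ) :
    partialLoadWrt l h σ q 0 c = 0 :=
  sum_eq_zero fun _ _ => if_neg (Nat.not_lt_zero _)

theorem partialLoadWrt_succ (σ : Equiv.Perm (Fin n)) (q : Fin n → ℕ) {k : ℕ} (hk : k < n)
    (c : ℕ) : partialLoadWrt l h σ q (k + 1) c =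
      partialLoadWrt l h σ q k c + bcLoad l h (σ ⟨k, hk⟩) (q (σ ⟨k, hk⟩)) c := by
  have hfilter : univ.filter (fun t : Fin n => (t : ℕ) < k + 1) =
      insert ⟨k, hk⟩ (univ.filter fun t : Fin n => (t : ℕ) < k) := by
    ext t
    simp only [mem_filter, mem_univ, true_and, mem_insert, Fin.ext_iff]
    omega
  simp only [partialLoadWrt, ← sum_filter]
  rw [hfilter, sum_insert (by simp), add_comm]

theorem partialLoadWrt_of_le (σ : Equiv.Perm (Fin n)) (q : Fin n → ℕ) {K : ℕ} (hK : n ≤ K)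
    (c : ℕ) : partialLoadWrt l h σ q K c = cellLoad l h q c := by
  rw [cellLoad_eq_sum, ← Equiv.sum_comp σ]
  exact sum_congr rfl fun t _ => if_pos (t.isLt.trans_le hK)

theorem partialLoadWrt_le_cellLoad (hval : ValidBC l h) (σ : Equiv.Perm (Fin n))
    (q : Fin n → ℕ) (K c : ℕ) : partialLoadWrt l h σ q K c ≤ cellLoad l h q c := by
  rw [cellLoad_eq_sum, ← Equiv.sum_comp σ]
  refine sum_le_sum fun t _ => ?_
  split_ifs
  exacts [le_rfl, bcLoad_nonneg hval _ _ _]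

theorem partialLoadWrt_le_partialLoadWrt (hval : ValidBC l h) (hni : NonIncreasing l h)
    {σ : Equiv.Perm (Fin n)} {q p : Fin n → ℕ} {K c : ℕ}
    (hqp : ∀ t : Fin n, (t : ℕ) < K → q (σ t) ≤ p (σ t) ∧ p (σ t) ≤ c) :
    partialLoadWrt l h σ q K c ≤ partialLoadWrt l h σ p K c :=
  sum_le_sum fun t _ => by
    split_ifs with ht
    exacts [bcLoad_le_bcLoad hval hni (hqp t ht).1 (hqp t ht).2, le_rfl]

theorem cellLoad_comp_of_injective {p p' : Fin n → ℕ} {g : ℕ → ℕ} (hg : g.Injective)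
    (hpp' : ∀ i, ∀ j < l i, p i + j = g (p' i + j)) (c : ℕ) :
    cellLoad l h p (g c) = cellLoad l h p' c :=
  sum_congr rfl fun i _ => sum_congr rfl fun j hj => by
    simp only [hpp' i j (mem_range.1 hj), hg.eq_iff]

theorem packLen_eq_of_injective {p p' : Fin n → ℕ} {g : ℕ → ℕ} (hg : g.Injective)
    (hpp' : ∀ i, ∀ j < l i, p i + j = g (p' i + j)) : packLen l p = packLen l p' := by
  rw [packLen, packLen, ← card_image_of_injective (occupied l p') hg, occupied, occupied,
    image_image]
  exact congrArg card (image_congr fun x hx => hpp' x.1 x.2 (by simpa using hx))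

theorem Feasible.one_le_of_mem_occupied {p : Fin n → ℕ} (hp : Feasible l h p) {c : ℕ}
    (hc : c ∈ occupied l p) : 1 ≤ c := by
  obtain ⟨i, j, -, rfl⟩ := mem_occupied.1 hc
  exact (hp.1 i).trans (Nat.le_add_right _ _)

theorem feasible_of_disjoint (hval : ValidBC l h) {p : Fin n → ℕ} (hp : ∀ i, 1 ≤ p i)
    (hdisj : ∀ i i', i < i' → p i + l i ≤ p i') : Feasible l h p := by
  refine ⟨hp, fun c => ?_⟩
  rw [cellLoad_eq_sum]
  by_cases hc : ∃ i, p i ≤ c ∧ c - p i < l i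
  · obtain ⟨i, hi⟩ := hc
    rw [sum_eq_single i (fun i' _ hi' => ?_) (by simp)]
    · exact bcLoad_le_one hval i _ c
    rw [bcLoad_eq, if_neg]
    rcases lt_or_gt_of_ne hi' with hlt | hlt
    · have := hdisj _ _ hlt; omega
    · have := hdisj _ _ hlt; omega
  · push Not at hc
    rw [sum_eq_zero fun i _ => by rw [bcLoad_eq, if_neg fun hi => (hc i hi.1).not_gt hi.2]]
    exact zero_le_one

theorem exists_feasible (hval : ValidBC l h) : ∃ p, Feasible l h p := by
  set L := ∑ i, l i
  refine ⟨fun i => 1 + i * L, feasible_of_disjoint hval (fun _ => Nat.le_add_right _ _)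
    fun i i' hii' => ?_⟩
  have hl : l i ≤ L := single_le_sum (fun _ _ => Nat.zero_le _) (mem_univ i)
  have := Nat.mul_le_mul_right L (show (i : ℕ) + 1 ≤ i' from hii')
  rw [add_mul, one_mul] at this
  omega

theorem exists_feasible_packLen_eq_OPT (hval : ValidBC l h) :
    ∃ p, Feasible l h p ∧ packLen l p = OPT l h := by
  obtain ⟨p, hp⟩ := exists_feasible hval
  exact Nat.sInf_mem (s := {m | ∃ p, Feasible l h p ∧ packLen l p = m}) ⟨_, p, hp, rfl⟩

theorem OPT_le_packLen {p : Fin n → ℕ} (hp : Feasible l h p) : OPT l h ≤ packLen l p :=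
  Nat.sInf_le ⟨p, hp, rfl⟩

theorem exists_feasible_sum_lt_of_gap {p : Fin n → ℕ} (hp : Feasible l h p) {d : ℕ}
    (hd : 1 ≤ d) (hdp : d ∉ occupied l p) (hdp' : d + 1 ∈ occupied l p) :
    ∃ p', Feasible l h p' ∧ packLen l p' = packLen l p ∧ ∑ i, p' i < ∑ i, p i := by
  have hsplit : ∀ i, p i + l i ≤ d ∨ d < p i := fun i => by
    by_contra! hi
    exact hdp (mem_occupied.2 ⟨i, d - p i, by omega, by omega⟩)
  -- close the gap at `d`; `g` sends the new cells to the old ones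
  let p' i := if d < p i then p i - 1 else p i
  let g c := if c < d then c else c + 1
  have hg : g.Injective := fun a b hab => by
    simp only [g] at hab
    split_ifs at hab <;> omega
  have hpp' : ∀ i, ∀ j < l i, p i + j = g (p' i + j) := fun i j hj => by
    have := hsplit i
    simp only [g, p']
    split_ifs <;> omega
  obtain ⟨i, j, hj, hij⟩ := mem_occupied.1 hdp'
  refine ⟨p', ⟨fun i => ?_, fun c => ?_⟩, (packLen_eq_of_injective hg hpp').symm, ?_⟩
  · have := hp.1 i
    simp only [p']
    split_ifs <;> omega
  · rw [← cellLoad_comp_of_injective hg hpp']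
    exact hp.2 _
  · refine sum_lt_sum (fun i _ => by simp only [p']; split_ifs <;> omega) ⟨i, mem_univ _, ?_⟩
    have := hsplit i
    have := hp.1 i
    simp only [p']
    split_ifs <;> omega

theorem exists_feasible_occupied_eq_Icc {p : Fin n → ℕ} (hp : Feasible l h p) :
    ∃ p', Feasible l h p' ∧ packLen l p' = packLen l p ∧
      occupied l p' = Icc 1 (packLen l p') := by
  induction hs : ∑ i, p i using Nat.strong_induction_on generalizing p with
  | _ s ih =>
    by_cases hgap : ∀ d, 1 ≤ d → d + 1 ∈ occupied l p → d ∈ occupied l p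
    · exact ⟨p, hp, rfl, eq_Icc_one_card_of_pred_mem (fun _ => hp.one_le_of_mem_occupied) hgap⟩
    · push Not at hgap
      obtain ⟨d, hd, hdp', hdp⟩ := hgap
      obtain ⟨p', hp', hlen', hsum'⟩ := exists_feasible_sum_lt_of_gap hp hd hdp hdp'
      obtain ⟨p'', hp'', hlen'', hocc''⟩ := ih _ (hs ▸ hsum') hp' rfl
      exact ⟨p'', hp'', hlen''.trans hlen', hocc''⟩

theorem packLen_le_of_le {q p : Fin n → ℕ} (hq : occupied l q = Icc 1 (packLen l q))
    (hp : occupied l p = Icc 1 (packLen l p)) (hqp : ∀ i, q i ≤ p i) :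
    packLen l q ≤ packLen l p := by
  rcases Nat.eq_zero_or_pos (packLen l q) with hzero | hpos
  · exact hzero ▸ Nat.zero_le _
  have hlast : packLen l q ∈ occupied l q := hq ▸ mem_Icc.2 ⟨hpos, le_rfl⟩
  obtain ⟨i, j, hj, hij⟩ := mem_occupied.1 hlast
  have hpij : p i + j ∈ occupied l p := mem_occupied.2 ⟨i, j, hj, rfl⟩
  rw [hp, mem_Icc] at hpij
  have := hqp i
  omega

-- the cell of BC `σ k`; the value for `k ≥ n` is irrelevant
noncomputable def greedyCell (l : Fin n → ℕ) (h : Fin n → ℕ → ℝ) (σ : Equiv.Perm (Fin n)) :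
    ℕ → ℕ
  | 0 => 1
  | k + 1 =>
    if hk : k + 1 < n then
      sInf {m | greedyCell l h σ k ≤ m ∧ ∀ c,
        (∑ t : Fin n, if (t : ℕ) < k + 1 then bcLoad l h (σ t) (greedyCell l h σ t) c else 0) +
          bcLoad l h (σ ⟨k + 1, hk⟩) m c ≤ 1}
    else 0

theorem exists_isGreedyWrt (σ : Equiv.Perm (Fin n)) : ∃ q, IsGreedyWrt l h σ q := by
  refine ⟨fun i => greedyCell l h σ (σ.symm i), fun _ => by simp [greedyCell], fun k hk => ?_⟩
  simp only [Equiv.symm_apply_apply]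
  rw [greedyCell, dif_pos hk]
  simp [partialLoadWrt]

section Greedy

variable {σ : Equiv.Perm (Fin n)} {q p : Fin n → ℕ}

-- the set whose infimum `IsGreedyWrt` prescribes as the cell of BC `σ (k+1)`
def greedyCandidates (l : Fin n → ℕ) (h : Fin n → ℕ → ℝ) (σ : Equiv.Perm (Fin n))
    (q : Fin n → ℕ) (k : ℕ) (hk : k + 1 < n) : Set ℕ :=
  {m | q (σ ⟨k, Nat.lt_of_succ_lt hk⟩) ≤ m ∧
    ∀ c, partialLoadWrt l h σ q (k + 1) c + bcLoad l h (σ ⟨k + 1, hk⟩) m c ≤ 1}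

theorem IsGreedyWrt.mem_greedyCandidates (hq : IsGreedyWrt l h σ q) {k : ℕ} (hk : k + 1 < n)
    {m : ℕ} (hm : m ∈ greedyCandidates l h σ q k hk) :
    q (σ ⟨k + 1, hk⟩) ∈ greedyCandidates l h σ q k hk := by
  rw [hq.2 k hk]
  exact Nat.sInf_mem ⟨m, hm⟩

theorem IsGreedyWrt.le_of_mem_greedyCandidates (hq : IsGreedyWrt l h σ q) {k : ℕ}
    (hk : k + 1 < n) {m : ℕ} (hm : m ∈ greedyCandidates l h σ q k hk) :
    q (σ ⟨k + 1, hk⟩) ≤ m := by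
  rw [hq.2 k hk]
  exact Nat.sInf_le hm

theorem mem_greedyCandidates_of_le (hval : ValidBC l h) (hni : NonIncreasing l h)
    (hp : Feasible l h p) (hmono : Monotone (p ∘ σ)) {k : ℕ} (hk : k + 1 < n)
    (hload : ∀ c, partialLoadWrt l h σ q (k + 1) c ≤ 1)
    (hqp : ∀ t : Fin n, (t : ℕ) ≤ k → q (σ t) ≤ p (σ t)) :
    p (σ ⟨k + 1, hk⟩) ∈ greedyCandidates l h σ q k hk := by
  set s : Fin n := ⟨k + 1, hk⟩
  refine ⟨(hqp _ le_rfl).trans (hmono (Fin.mk_le_mk.2 k.le_succ)), fun c => ?_⟩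
  by_cases hc : p (σ s) ≤ c
  · have hle : ∀ t : Fin n, (t : ℕ) < k + 1 → q (σ t) ≤ p (σ t) ∧ p (σ t) ≤ c :=
      fun t ht => ⟨hqp t (by omega), (hmono (show t ≤ s from Fin.le_def.2 ht.le)).trans hc⟩
    calc _ ≤ partialLoadWrt l h σ p (k + 1) c + bcLoad l h (σ s) (p (σ s)) c :=
          add_le_add_left (partialLoadWrt_le_partialLoadWrt hval hni hle) _
      _ = partialLoadWrt l h σ p (k + 2) c := (partialLoadWrt_succ σ p hk c).symm
      _ ≤ 1 := (partialLoadWrt_le_cellLoad hval σ p _ c).trans (hp.2 c)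
  · rw [bcLoad_of_lt (not_le.1 hc), add_zero]
    exact hload c

theorem IsGreedyWrt.invariant (hval : ValidBC l h) (hni : NonIncreasing l h)
    (hq : IsGreedyWrt l h σ q) (hp : Feasible l h p) (hmono : Monotone (p ∘ σ)) :
    ∀ k ≤ n, (∀ c, partialLoadWrt l h σ q k c ≤ 1) ∧
      ∀ t : Fin n, (t : ℕ) < k → 1 ≤ q (σ t) ∧ q (σ t) ≤ p (σ t) := by
  intro k
  induction k with
  | zero =>
    exact fun _ => ⟨fun c => (partialLoadWrt_zero σ q c).trans_le zero_le_one,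
      fun t ht => absurd ht (Nat.not_lt_zero _)⟩
  | succ k ih =>
    intro hk
    obtain ⟨hload, hqp⟩ := ih (by omega)
    have hnew : (∀ c, partialLoadWrt l h σ q k c + bcLoad l h (σ ⟨k, hk⟩) (q (σ ⟨k, hk⟩)) c ≤ 1)
        ∧ 1 ≤ q (σ ⟨k, hk⟩) ∧ q (σ ⟨k, hk⟩) ≤ p (σ ⟨k, hk⟩) := by
      rcases k with _ | k
      · rw [hq.1 hk]
        refine ⟨fun c => ?_, le_rfl, hp.1 _⟩
        rw [partialLoadWrt_zero, zero_add]
        exact bcLoad_le_one hval _ _ _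
      · have hm := mem_greedyCandidates_of_le hval hni hp hmono hk hload
          fun t ht => (hqp t (by omega)).2
        obtain ⟨hstep, hfit⟩ := hq.mem_greedyCandidates hk hm
        exact ⟨hfit, (hqp _ (Nat.lt_succ_self k)).1.trans hstep,
          hq.le_of_mem_greedyCandidates hk hm⟩
    refine ⟨fun c => (partialLoadWrt_succ σ q hk c).trans_le (hnew.1 c), fun t ht => ?_⟩
    rcases Nat.lt_succ_iff_lt_or_eq.1 ht with ht | ht
    · exact hqp t ht
    · obtain rfl : t = ⟨k, hk⟩ := Fin.ext ht
      exact hnew.2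

theorem IsGreedyWrt.feasible (hval : ValidBC l h) (hni : NonIncreasing l h)
    (hq : IsGreedyWrt l h σ q) (hp : Feasible l h p) (hmono : Monotone (p ∘ σ)) :
    Feasible l h q := by
  obtain ⟨hload, hqp⟩ := hq.invariant hval hni hp hmono n le_rfl
  refine ⟨fun i => ?_, fun c => partialLoadWrt_of_le σ q le_rfl c ▸ hload c⟩
  simpa using (hqp (σ.symm i) (σ.symm i).isLt).1

theorem IsGreedyWrt.le (hval : ValidBC l h) (hni : NonIncreasing l h)
    (hq : IsGreedyWrt l h σ q) (hp : Feasible l h p) (hmono : Monotone (p ∘ σ)) (i : Fin n) :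
    q i ≤ p i := by
  simpa using ((hq.invariant hval hni hp hmono n le_rfl).2 (σ.symm i) (σ.symm i).isLt).2

theorem IsGreedyWrt.mem_greedyCandidates_of_feasible (hval : ValidBC l h)
    (hni : NonIncreasing l h) (hq : IsGreedyWrt l h σ q) (hp : Feasible l h p)
    (hmono : Monotone (p ∘ σ)) {k : ℕ} (hk : k + 1 < n) :
    q (σ ⟨k + 1, hk⟩) ∈ greedyCandidates l h σ q k hk := by
  obtain ⟨hload, hqp⟩ := hq.invariant hval hni hp hmono (k + 1) hk.le
  exact hq.mem_greedyCandidates hk (mem_greedyCandidates_of_le hval hni hp hmono hk hload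
    fun t ht => (hqp t (Nat.lt_succ_of_le ht)).2)

theorem IsGreedyWrt.mem_occupied_of_succ_mem (hval : ValidBC l h) (hni : NonIncreasing l h)
    (hq : IsGreedyWrt l h σ q)
    (hcand : ∀ k (hk : k + 1 < n), q (σ ⟨k + 1, hk⟩) ∈ greedyCandidates l h σ q k hk)
    {d : ℕ} (hd : 1 ≤ d) (hd' : d + 1 ∈ occupied l q) : d ∈ occupied l q := by
  classical
  by_contra hdq
  obtain ⟨i, j, hj, hij⟩ := mem_occupied.1 hd'
  have hqi : q i = d + 1 := by
    by_contra
    exact hdq (mem_occupied.2 ⟨i, d - q i, by omega, by omega⟩)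
  have hex : ∃ K, ∃ hK : K < n, q (σ ⟨K, hK⟩) = d + 1 := ⟨σ.symm i, (σ.symm i).isLt, by simpa⟩
  obtain ⟨K, ⟨hK, hqK⟩, hmin⟩ : ∃ K, (∃ hK : K < n, q (σ ⟨K, hK⟩) = d + 1) ∧
      ∀ K' < K, ¬∃ hK' : K' < n, q (σ ⟨K', hK'⟩) = d + 1 :=
    ⟨Nat.find hex, Nat.find_spec hex, fun _ => Nat.find_min hex⟩
  obtain _ | k := K
  · rw [hq.1 hK] at hqK
    omega
  -- the first BC in the order σ placed at `d + 1` would have fitted at `d`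
  obtain ⟨hstep, hfit⟩ := hcand k hK
  have hprev : q (σ ⟨k, Nat.lt_of_succ_lt hK⟩) ≠ d + 1 := fun he =>
    hmin k (Nat.lt_succ_self k) ⟨_, he⟩
  have hdK : d ∈ greedyCandidates l h σ q k hK := by
    refine ⟨by omega, fun c => ?_⟩
    rcases eq_or_ne c d with rfl | hc
    · have := (partialLoadWrt_le_cellLoad hval σ q (k + 1) c).trans (cellLoad_eq_zero hdq).le
      linarith [bcLoad_le_one hval (σ ⟨k + 1, hK⟩) c c]
    · have := hfit c
      rw [hqK] at this
      linarith [bcLoad_le_bcLoad_succ hval hni (i := σ ⟨k + 1, hK⟩) hc]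
  have := hq.le_of_mem_greedyCandidates hK hdK
  omega

theorem IsGreedyWrt.occupied_eq_Icc (hval : ValidBC l h) (hni : NonIncreasing l h)
    (hq : IsGreedyWrt l h σ q) (hp : Feasible l h p) (hmono : Monotone (p ∘ σ)) :
    occupied l q = Icc 1 (packLen l q) :=
  eq_Icc_one_card_of_pred_mem (fun _ => (hq.feasible hval hni hp hmono).one_le_of_mem_occupied)
    fun _ => hq.mem_occupied_of_succ_mem hval hni
      (fun _ => hq.mem_greedyCandidates_of_feasible hval hni hp hmono)

end Greedy

/-- for every finite collection of non-increasing BCs there is an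
ordering `σ` such that the greedy packing with respect to `σ` is feasible and
achieves the minimum length over all feasible packings. -/
theorem exists_order_greedy_optimal {n : ℕ} (l : Fin n → ℕ) (h : Fin n → ℕ → ℝ)
    (hval : ValidBC l h)
    (hni : ∀ (i : Fin n) (j : ℕ), j + 1 < l i → h i (j + 1) ≤ h i j) :
    ∃ (σ : Equiv.Perm (Fin n)) (q : Fin n → ℕ), IsGreedyWrt l h σ q ∧
      Feasible l h q ∧ packLen l q = OPT l h := by
  obtain ⟨p₀, hp₀, hlen₀⟩ := exists_feasible_packLen_eq_OPT hval
  obtain ⟨p, hp, hlen, hocc⟩ := exists_feasible_occupied_eq_Icc hp₀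
  have hmono : Monotone (p ∘ Tuple.sort p) := Tuple.monotone_sort p
  obtain ⟨q, hq⟩ := exists_isGreedyWrt (l := l) (h := h) (Tuple.sort p)
  have hqf := hq.feasible hval hni hp hmono
  refine ⟨Tuple.sort p, q, hq, hqf, le_antisymm ?_ (OPT_le_packLen hqf)⟩
  rw [← hlen₀, ← hlen]
  exact packLen_le_of_le (hq.occupied_eq_Icc hval hni hp hmono) hocc (hq.le hval hni hp hmono)
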